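/- arXiv:2406.12193 — 2 statements merged into one kernel-verified Lean document; each statement's English description precedes it below -/
import Mathlib

section
/- Let x ∈ ℝⁿ with components sorted so that m₁ ≤ ... ≤ mₙ, and let α = (k·m_{k+1} - ∑_{j=1}^{k} m_j)/2 > 0. Then the vector s with s_j = max(ψ - m_j/(2α), 0) where ψ = 1/k + (∑_{j=1}^{k} m_j)/(2kα), satisfies s_k > 0 (when m_k < m_{k+1}) and s_{k+1} = 0, and ∑_j s_j = 1. -/
/-!
Writing `2α = k m_{k+1} - ∑_{j ≤ k} m_j`, the threshold simplifies to `ψ = m_{k+1} / (2α)`, so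
`s_j = max (m_{k+1} - m_j) 0 / (2α)`. By monotonicity the positive part vanishes from index `k + 1`
on, and the remaining `k` terms sum to `(k m_{k+1} - ∑_{j ≤ k} m_j) / (2α) = 1`.
-/

open Finset

lemma sum_Icc_max_sub_eq_of_monotone {m : ℕ → ℝ} (hm : Monotone m) {k n : ℕ} (hkn : k ≤ n) :
    ∑ j ∈ Icc 1 n, max (m (k + 1) - m j) 0 = k * m (k + 1) - ∑ j ∈ Icc 1 k, m j := by
  have Icc_one : ∀ b, Icc 1 b = Ioc 0 b := Icc_add_one_left_eq_Ioc 0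
  have head : ∑ j ∈ Ioc 0 k, max (m (k + 1) - m j) 0 = ∑ j ∈ Icc 1 k, (m (k + 1) - m j) := by
    refine sum_congr (Icc_one k) fun j hj => max_eq_left ?_
    exact sub_nonneg.2 (hm (by simp at hj; omega))
  have tail : ∑ j ∈ Ioc k n, max (m (k + 1) - m j) 0 = 0 :=
    sum_eq_zero fun j hj => max_eq_right (sub_nonpos.2 (hm (mem_Ioc.1 hj).1))
  rw [Icc_one n, ← sum_Ioc_consecutive _ (Nat.zero_le k) hkn, head, tail, add_zero,
    sum_sub_distrib, sum_const, Nat.card_Icc, Nat.add_sub_cancel, nsmul_eq_mul]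

theorem stmt_3 (n k : ℕ) (m : ℕ → ℝ) (hm : Monotone m)
    (hk1 : 1 ≤ k) (hk : k < n)
    (α : ℝ)
    (hα : α = ((k : ℝ) * m (k + 1) - ∑ j ∈ Finset.Icc 1 k, m j) / 2)
    (hαpos : 0 < α)
    (ψ : ℝ)
    (hψ : ψ = 1 / (k : ℝ) + (∑ j ∈ Finset.Icc 1 k, m j) / (2 * (k : ℝ) * α))
    (s : ℕ → ℝ)
    (hs : ∀ j, s j = max (ψ - m j / (2 * α)) 0) :
    (m k < m (k + 1) → 0 < s k) ∧ s (k + 1) = 0 ∧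
      ∑ j ∈ Finset.Icc 1 n, s j = 1 := by
  have hk0 : (k : ℝ) ≠ 0 := Nat.cast_ne_zero.2 (by omega)
  have h2α : 2 * α = k * m (k + 1) - ∑ j ∈ Icc 1 k, m j := by rw [hα]; ring
  have hψ' : ψ = m (k + 1) / (2 * α) := by
    rw [hψ]
    field_simp
    linear_combination h2α
  have hs' : ∀ j, s j = max (m (k + 1) - m j) 0 / (2 * α) := fun j => by
    rw [hs, hψ', ← sub_div, ← max_div_div_right (by positivity), zero_div]
  refine ⟨fun hlt => ?_, by simp [hs'], ?_⟩
  · rw [hs']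
    exact div_pos (lt_max_of_lt_left (sub_pos.2 hlt)) (by positivity)
  · simp_rw [hs', ← sum_div, sum_Icc_max_sub_eq_of_monotone hm hk.le, ← h2α]
    exact div_self (by positivity)
end

section
/- Let f(W) = ‖H Xᵀ W − H F‖_F² + λ‖W‖_{2,1} + θ·Tr(Wᵀ X L_s Xᵀ W) and g(W, D) = ‖H Xᵀ W − H F‖_F² + λ·Tr(Wᵀ D W) + θ·Tr(Wᵀ X L_s Xᵀ W). Suppose D^{(t)} has diagonal entries 1/(2‖w^{(t)}_{i·}‖₂), all rows of W^{(t)} and W^{(t+1)} are nonzero, and g(W^{(t+1)}, D^{(t)}) ≤ g(W^{(t)}, D^{(t)}). Then f(W^{(t+1)}) ≤ f(W^{(t)}). -/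
/-! With `D` the diagonal matrix of weights `1 / (2‖w⁽ᵗ⁾ᵢ‖)`, the objectives differ by
`f W - g W D = λ ∑ᵢ (‖wᵢ‖ - ‖wᵢ‖² / (2‖w⁽ᵗ⁾ᵢ‖))`, and each summand is maximised at `wᵢ = w⁽ᵗ⁾ᵢ`
since `x - x² / (2y) ≤ y / 2` is `(x - y)² ≥ 0`. So decreasing `g(·, D)` decreases `f`. -/

open Matrix

theorem Matrix.trace_transpose_mul_diagonal_mul {m n R : Type*} [Fintype m] [Fintype n]
    [DecidableEq m] [CommSemiring R] (v : m → R) (W : Matrix m n R) :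
    (Wᵀ * diagonal v * W).trace = ∑ i, v i * ∑ j, W i j ^ 2 := by
  simp only [trace, diag, mul_apply, transpose_apply, diagonal_apply, mul_ite, mul_zero,
    Finset.sum_ite_eq', Finset.mem_univ, if_true, Finset.mul_sum]
  rw [Finset.sum_comm]
  exact Finset.sum_congr rfl fun i _ => Finset.sum_congr rfl fun j _ => by ring

theorem Matrix.sum_sq_row_pos {m n : Type*} [Fintype n] {W : Matrix m n ℝ} {i : m}
    (hi : W i ≠ 0) : 0 < ∑ j, W i j ^ 2 := by
  refine (Finset.sum_nonneg fun j _ => sq_nonneg (W i j)).lt_of_ne' fun h => hi ?_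
  funext j
  exact pow_eq_zero_iff two_ne_zero |>.mp <|
    congrFun ((Fintype.sum_eq_zero_iff_of_nonneg fun j => sq_nonneg (W i j)).mp h) j

theorem sub_one_div_two_mul_sq_le (x : ℝ) {y : ℝ} (hy : 0 < y) :
    x - 1 / (2 * y) * x ^ 2 ≤ y - 1 / (2 * y) * y ^ 2 :=
  calc x - 1 / (2 * y) * x ^ 2 = y - 1 / (2 * y) * y ^ 2 - (x - y) ^ 2 / (2 * y) := by
        field_simp
        ring
    _ ≤ y - 1 / (2 * y) * y ^ 2 := sub_le_self _ (by positivity)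

theorem sum_sqrt_sub_weighted_le {ι : Type*} [Fintype ι] {a b : ι → ℝ}
    (ha : ∀ i, 0 ≤ a i) (hb : ∀ i, 0 < b i) :
    ∑ i, √(a i) - ∑ i, 1 / (2 * √(b i)) * a i
      ≤ ∑ i, √(b i) - ∑ i, 1 / (2 * √(b i)) * b i := by
  simp only [← Finset.sum_sub_distrib]
  refine Finset.sum_le_sum fun i _ => ?_
  have key := sub_one_div_two_mul_sq_le √(a i) (Real.sqrt_pos.mpr (hb i))
  rwa [Real.sq_sqrt (ha i), Real.sq_sqrt (hb i).le] at key

open Matrix in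
theorem stmt_12_general (d n c : ℕ)
    (X : Matrix (Fin d) (Fin n) ℝ) (F : Matrix (Fin n) (Fin c) ℝ)
    (H Ls : Matrix (Fin n) (Fin n) ℝ)
    (lam θ : ℝ) (hlam : 0 < lam)
    (f : Matrix (Fin d) (Fin c) ℝ → ℝ)
    (hf : ∀ W, f W =
      ((H * Xᵀ * W - H * F)ᵀ * (H * Xᵀ * W - H * F)).trace
        + lam * ∑ i, Real.sqrt (∑ j, (W i j) ^ 2)
        + θ * (Wᵀ * X * Ls * Xᵀ * W).trace)
    (g : Matrix (Fin d) (Fin c) ℝ → Matrix (Fin d) (Fin d) ℝ → ℝ)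
    (hg : ∀ W D, g W D =
      ((H * Xᵀ * W - H * F)ᵀ * (H * Xᵀ * W - H * F)).trace
        + lam * (Wᵀ * D * W).trace
        + θ * (Wᵀ * X * Ls * Xᵀ * W).trace)
    (W0 W1 : Matrix (Fin d) (Fin c) ℝ)
    (hW0 : ∀ i, W0 i ≠ 0)
    (D0 : Matrix (Fin d) (Fin d) ℝ)
    (hD0 : D0 = Matrix.diagonal (fun i => 1 / (2 * Real.sqrt (∑ j, (W0 i j) ^ 2))))
    (hdec : g W1 D0 ≤ g W0 D0) :
    f W1 ≤ f W0 := by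
  have f_eq_g_add : ∀ W : Matrix (Fin d) (Fin c) ℝ, f W = g W D0 + lam *
      (∑ i, √(∑ j, W i j ^ 2) - ∑ i, 1 / (2 * √(∑ j, W0 i j ^ 2)) * ∑ j, W i j ^ 2) := by
    intro W
    rw [hf, hg, hD0, trace_transpose_mul_diagonal_mul]
    ring
  have gap_le := sum_sqrt_sub_weighted_le (a := fun i => ∑ j, W1 i j ^ 2)
    (fun i => Finset.sum_nonneg fun j _ => sq_nonneg (W1 i j)) fun i => sum_sq_row_pos (hW0 i)
  rw [f_eq_g_add W1, f_eq_g_add W0]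
  exact add_le_add hdec (mul_le_mul_of_nonneg_left gap_le hlam.le)

open Matrix in
theorem stmt_12 (d n c : ℕ)
    (X : Matrix (Fin d) (Fin n) ℝ) (F : Matrix (Fin n) (Fin c) ℝ)
    (H Ls : Matrix (Fin n) (Fin n) ℝ)
    (hH : H = 1 - (n : ℝ)⁻¹ • Matrix.of (fun _ _ => (1 : ℝ)))
    (hLs : Ls.PosSemidef)
    (lam θ : ℝ) (hlam : 0 < lam) (hθ : 0 < θ)
    (f : Matrix (Fin d) (Fin c) ℝ → ℝ)
    (hf : ∀ W, f W =
      ((H * Xᵀ * W - H * F)ᵀ * (H * Xᵀ * W - H * F)).trace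
        + lam * ∑ i, Real.sqrt (∑ j, (W i j) ^ 2)
        + θ * (Wᵀ * X * Ls * Xᵀ * W).trace)
    (g : Matrix (Fin d) (Fin c) ℝ → Matrix (Fin d) (Fin d) ℝ → ℝ)
    (hg : ∀ W D, g W D =
      ((H * Xᵀ * W - H * F)ᵀ * (H * Xᵀ * W - H * F)).trace
        + lam * (Wᵀ * D * W).trace
        + θ * (Wᵀ * X * Ls * Xᵀ * W).trace)
    (W0 W1 : Matrix (Fin d) (Fin c) ℝ)
    (hW0 : ∀ i, W0 i ≠ 0) (hW1 : ∀ i, W1 i ≠ 0)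
    (D0 : Matrix (Fin d) (Fin d) ℝ)
    (hD0 : D0 = Matrix.diagonal (fun i => 1 / (2 * Real.sqrt (∑ j, (W0 i j) ^ 2))))
    (hdec : g W1 D0 ≤ g W0 D0) :
    f W1 ≤ f W0 :=
  stmt_12_general d n c X F H Ls lam θ hlam f hf g hg W0 W1 hW0 D0 hD0 hdec
end
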